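/- Suppose nonnegative random sequences Q_n(t) (n = 1,…,N) and a cost process g(t) ≥ 0 satisfy, for all t, E[L(Q(t+1)) - L(Q(t))] + V·E[g(t)] ≤ B - ε·∑_n E[Q_n(t)] + V·g*, with L(Q) = (1/2)∑_n Q_n^2, L(Q(0)) finite, and constants V, ε, B > 0. Then limsup_{T→∞} (1/T) ∑_{t=0}^{T-1} E[g(t)] ≤ g* + B/V. -/
import Mathlib


open MeasureTheory Filter Finset

theorem stmt_3 {Ω : Type*} [MeasureSpace Ω] [IsProbabilityMeasure (volume : Measure Ω)]
    (N : ℕ) (Q : ℕ → Fin N → Ω → ℝ) (g : ℕ → Ω → ℝ)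
    (V ε B gstar : ℝ) (hV : 0 < V) (hε : 0 < ε) (hB : 0 < B)
    (hQnn : ∀ t n ω, 0 ≤ Q t n ω)
    (hgnn : ∀ t ω, 0 ≤ g t ω)
    (hQint : ∀ t n, Integrable (fun ω => Q t n ω))
    (hQsqint : ∀ t n, Integrable (fun ω => (Q t n ω)^2))
    (hgint : ∀ t, Integrable (g t))
    (hdrift : ∀ t,
      (∫ ω, (1/2) * ∑ n, (Q (t+1) n ω)^2) - (∫ ω, (1/2) * ∑ n, (Q t n ω)^2)
        + V * (∫ ω, g t ω)
      ≤ B - ε * ∑ n, (∫ ω, Q t n ω) + V * gstar) :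
    Filter.limsup
      (fun T : ℕ => (1/(T:ℝ)) * ∑ t ∈ Finset.range T, (∫ ω, g t ω))
      atTop ≤ gstar + B / V := by
  set L : ℕ → ℝ := fun t => ∫ ω, (1/2) * ∑ n, (Q t n ω)^2 with hL
  set G : ℕ → ℝ := fun t => ∫ ω, g t ω with hG
  have hLnn : ∀ t, 0 ≤ L t := by
    intro t
    apply integral_nonneg
    intro ω
    positivity
  have hSnn : ∀ t, 0 ≤ ∑ n, (∫ ω, Q t n ω) := by
    intro t
    apply Finset.sum_nonneg
    intro n _
    exact integral_nonneg (fun ω => hQnn t n ω)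
  have key : ∀ t, V * G t ≤ B + V * gstar + (L t - L (t+1)) := by
    intro t
    have h := hdrift t
    have h2 : ε * ∑ n, (∫ ω, Q t n ω) ≥ 0 := mul_nonneg hε.le (hSnn t)
    simp only [hL, hG] at *
    linarith
  have sumkey : ∀ T : ℕ, V * ∑ t ∈ Finset.range T, G t ≤ T * (B + V * gstar) + L 0 := by
    intro T
    have tele : ∑ t ∈ Finset.range T, (L t - L (t+1)) = L 0 - L T := by
      rw [← Finset.sum_range_sub' L T]
    calc V * ∑ t ∈ Finset.range T, G t = ∑ t ∈ Finset.range T, V * G t := by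
          rw [Finset.mul_sum]
      _ ≤ ∑ t ∈ Finset.range T, (B + V * gstar + (L t - L (t+1))) :=
          Finset.sum_le_sum (fun t _ => key t)
      _ = T * (B + V * gstar) + (L 0 - L T) := by
          rw [Finset.sum_add_distrib, tele, Finset.sum_const, Finset.card_range,
            nsmul_eq_mul]
      _ ≤ T * (B + V * gstar) + L 0 := by linarith [hLnn T]
  have bound : ∀ T : ℕ, 1 ≤ T →
      (1/(T:ℝ)) * ∑ t ∈ Finset.range T, G t ≤ gstar + B / V + L 0 / (V * T) := by
    intro T hT
    have hTpos : (0:ℝ) < T := by exact_mod_cast hT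
    have hT0 : (T:ℝ) ≠ 0 := hTpos.ne'
    have h := sumkey T
    rw [one_div, inv_mul_le_iff₀ hTpos]
    have h2 : ∑ t ∈ Finset.range T, G t ≤ ((T:ℝ) * (B + V * gstar) + L 0) / V := by
      rw [le_div_iff₀ hV, mul_comm]
      exact h
    refine h2.trans (le_of_eq ?_)
    field_simp
    ring
  have htends : Tendsto (fun T : ℕ => gstar + B / V + L 0 / (V * T)) atTop
      (nhds (gstar + B / V)) := by
    have : Tendsto (fun T : ℕ => L 0 / (V * T)) atTop (nhds 0) := by
      have := Filter.Tendsto.const_div_atTop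
        (g := fun T : ℕ => V * (T:ℝ)) (r := L 0)
        (Filter.Tendsto.const_mul_atTop hV tendsto_natCast_atTop_atTop)
      exact this
    simpa using Filter.Tendsto.add (tendsto_const_nhds) this
  have hlim : Filter.limsup (fun T : ℕ => gstar + B / V + L 0 / (V * T)) atTop
      = gstar + B / V := htends.limsup_eq
  rw [← hlim]
  apply Filter.limsup_le_limsup
  · filter_upwards [Filter.eventually_ge_atTop 1] with T hT
    exact bound T hT
  · apply Filter.IsBoundedUnder.isCoboundedUnder_le
    refine ⟨0, Filter.eventually_map.2 (Filter.Eventually.of_forall fun T => ?_)⟩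
    have : 0 ≤ ∑ t ∈ Finset.range T, G t :=
      Finset.sum_nonneg fun t _ => integral_nonneg fun ω => hgnn t ω
    positivity
  · exact htends.isBoundedUnder_le
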